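/- arXiv:1202.5379 — 4 statements merged into one kernel-verified Lean document; each statement's English description precedes it below -/
import Mathlib

section
/- For every t ≥ 0 and x ∈ ℝⁿ, the Laplacian of the weight function satisfies Δ_x ψ(t,x) ≥ ((1+β)(n−α)/((2−α)(2+δ))) · a(x)b(t)/(1+t). -/
noncomputable section

open Real MeasureTheory Filter
open scoped RealInnerProductSpace ENNReal

abbrev E (n : ℕ) : Type := EuclideanSpace ℝ (Fin n)

/-- Japanese bracket `⟨x⟩ = (1+|x|²)^{1/2}`. -/
def jap {n : ℕ} (x : E n) : ℝ := Real.sqrt (1 + ‖x‖ ^ 2)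

/-- Space coefficient `a(x) = a₀ ⟨x⟩^{-α}`. -/
def aco {n : ℕ} (a₀ α : ℝ) (x : E n) : ℝ := a₀ * jap x ^ (-α)

/-- Time coefficient `b(t) = (1+t)^{-β}`. -/
def bco (β t : ℝ) : ℝ := (1 + t) ^ (-β)

/-- The constant `A = (1+β)a₀ / ((2-α)²(2+δ))`. -/
def Aco (a₀ α β δ : ℝ) : ℝ := (1 + β) * a₀ / ((2 - α) ^ 2 * (2 + δ))

/-- The weight `ψ(t,x) = A ⟨x⟩^{2-α}/(1+t)^{1+β}`. -/
def psiW {n : ℕ} (a₀ α β δ : ℝ) (t : ℝ) (x : E n) : ℝ :=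
  Aco a₀ α β δ * jap x ^ (2 - α) / (1 + t) ^ (1 + β)

/-- Laplacian of `f : ℝⁿ → ℝ` as the sum of second partial derivatives. -/
def lap {n : ℕ} (f : E n → ℝ) (x : E n) : ℝ :=
  ∑ i, fderiv ℝ (fun y => fderiv ℝ f y (EuclideanSpace.single i 1)) x (EuclideanSpace.single i 1)

/-- Divergence of a vector field on `ℝⁿ`. -/
def divg {n : ℕ} (V : E n → E n) (x : E n) : ℝ :=
  ∑ i, fderiv ℝ (fun y => V y i) x (EuclideanSpace.single i 1)

/-!
Write `F = 1 + ‖x‖²`, so that `ψ = A (1+t)^{-(1+β)} F^p` with `p = (2-α)/2`. A direct computation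
gives `Δ F^p = 2p (n F^{p-1} + 2(p-1) F^{p-2} ‖x‖²) = 2p(n+2p-2) F^{p-1} + 4p(1-p) F^{p-2}`, and the
last term is nonnegative for `0 ≤ p ≤ 1`, i.e. for `0 ≤ α ≤ 2`. With `2p = 2-α` and `n+2p-2 = n-α`
the leading term is exactly the claimed lower bound, because `A (2-α)² (2+δ) = (1+β) a₀` and
`a(x) b(t)/(1+t) = a₀ F^{p-1} (1+t)^{-(1+β)}`.
-/

section

variable {n : ℕ}

lemma lap_const_mul (c : ℝ) (f : E n → ℝ) (x : E n) :
    lap (fun y => c * f y) x = c * lap f x := by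
  have key (g : E n → ℝ) : fderiv ℝ (fun y => c * g y) = c • fderiv ℝ g :=
    fderiv_const_smul_field c
  simp only [lap, key, Pi.smul_apply, FunLike.coe_smul, smul_eq_mul, Finset.mul_sum]

lemma hasFDerivAt_one_add_norm_sq_rpow (p : ℝ) (y : E n) :
    HasFDerivAt (fun z : E n => (1 + ‖z‖ ^ 2) ^ p)
      ((p * (1 + ‖y‖ ^ 2) ^ (p - 1)) • (2 : ℕ) • innerSL ℝ y) y :=
  ((hasStrictFDerivAt_norm_sq y).hasFDerivAt.const_add 1).rpow_const
    (Or.inl (by positivity))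

lemma inner_single_one (y : E n) (i : Fin n) : ⟪y, EuclideanSpace.single i (1 : ℝ)⟫ = y i := by
  simp [EuclideanSpace.inner_single_right]

lemma fderiv_one_add_norm_sq_rpow_single (p : ℝ) (y : E n) (i : Fin n) :
    fderiv ℝ (fun z : E n => (1 + ‖z‖ ^ 2) ^ p) y (EuclideanSpace.single i 1)
      = 2 * p * ((1 + ‖y‖ ^ 2) ^ (p - 1) * y i) := by
  rw [(hasFDerivAt_one_add_norm_sq_rpow p y).fderiv]
  simp only [smul_apply, two_smul, add_apply, innerSL_apply_apply, inner_single_one, smul_eq_mul]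
  ring

lemma fderiv_one_add_norm_sq_rpow_mul_apply_single (q : ℝ) (x : E n) (i : Fin n) :
    fderiv ℝ (fun y : E n => (1 + ‖y‖ ^ 2) ^ q * y i) x (EuclideanSpace.single i 1)
      = (1 + ‖x‖ ^ 2) ^ q + 2 * q * (1 + ‖x‖ ^ 2) ^ (q - 1) * x i ^ 2 := by
  have hcoord : HasFDerivAt (fun y : E n => y i) (EuclideanSpace.proj (𝕜 := ℝ) i) x :=
    (EuclideanSpace.proj (𝕜 := ℝ) i).hasFDerivAt
  have hprod : HasFDerivAt (fun y : E n => (1 + ‖y‖ ^ 2) ^ q * y i)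
      ((1 + ‖x‖ ^ 2) ^ q • EuclideanSpace.proj (𝕜 := ℝ) i
        + x i • ((q * (1 + ‖x‖ ^ 2) ^ (q - 1)) • (2 : ℕ) • innerSL ℝ x)) x :=
    (hasFDerivAt_one_add_norm_sq_rpow q x).mul hcoord
  rw [hprod.fderiv]
  simp only [add_apply, smul_apply, two_smul, innerSL_apply_apply, inner_single_one, smul_eq_mul,
    PiLp.proj_apply, PiLp.single_eq_same]
  ring

lemma lap_one_add_norm_sq_rpow (p : ℝ) (x : E n) :
    lap (fun y : E n => (1 + ‖y‖ ^ 2) ^ p) x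
      = 2 * p * (n * (1 + ‖x‖ ^ 2) ^ (p - 1) + 2 * (p - 1) * (1 + ‖x‖ ^ 2) ^ (p - 2) * ‖x‖ ^ 2) := by
  have hterm (i : Fin n) :
      fderiv ℝ (fun y => fderiv ℝ (fun z : E n => (1 + ‖z‖ ^ 2) ^ p) y
        (EuclideanSpace.single i 1)) x (EuclideanSpace.single i 1)
      = 2 * p * ((1 + ‖x‖ ^ 2) ^ (p - 1) + 2 * (p - 1) * (1 + ‖x‖ ^ 2) ^ (p - 2) * x i ^ 2) := by
    have hpartial : (fun y => fderiv ℝ (fun z : E n => (1 + ‖z‖ ^ 2) ^ p) y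
        (EuclideanSpace.single i 1)) = (2 * p) • fun y : E n => (1 + ‖y‖ ^ 2) ^ (p - 1) * y i :=
      funext fun y => fderiv_one_add_norm_sq_rpow_single p y i
    rw [hpartial, fderiv_const_smul_field, Pi.smul_apply, smul_apply, smul_eq_mul,
      fderiv_one_add_norm_sq_rpow_mul_apply_single, sub_sub, one_add_one_eq_two]
  rw [lap, Finset.sum_congr rfl fun i _ => hterm i, EuclideanSpace.real_norm_sq_eq]
  simp only [← Finset.mul_sum, Finset.sum_add_distrib, Finset.sum_const, Finset.card_univ,
    Fintype.card_fin, nsmul_eq_mul]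

lemma mul_rpow_le_lap_one_add_norm_sq_rpow {p : ℝ} (hp₀ : 0 ≤ p) (hp₁ : p ≤ 1) (x : E n) :
    2 * p * (n + 2 * p - 2) * (1 + ‖x‖ ^ 2) ^ (p - 1)
      ≤ lap (fun y : E n => (1 + ‖y‖ ^ 2) ^ p) x := by
  have hF : 0 < 1 + ‖x‖ ^ 2 := by positivity
  have hsplit : (1 + ‖x‖ ^ 2) ^ (p - 1) = (1 + ‖x‖ ^ 2) ^ (p - 2) * (1 + ‖x‖ ^ 2) := by
    rw [← Real.rpow_add_one hF.ne']
    ring_nf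
  have hgap : lap (fun y : E n => (1 + ‖y‖ ^ 2) ^ p) x
      - 2 * p * (n + 2 * p - 2) * (1 + ‖x‖ ^ 2) ^ (p - 1)
      = 4 * p * (1 - p) * (1 + ‖x‖ ^ 2) ^ (p - 2) := by
    rw [lap_one_add_norm_sq_rpow, hsplit]
    ring
  have h1p : 0 ≤ 1 - p := sub_nonneg.2 hp₁
  have : 0 ≤ 4 * p * (1 - p) * (1 + ‖x‖ ^ 2) ^ (p - 2) := by positivity
  linarith

lemma jap_rpow (x : E n) (s : ℝ) : jap x ^ s = (1 + ‖x‖ ^ 2) ^ (s / 2) := by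
  rw [jap, Real.sqrt_eq_rpow, ← Real.rpow_mul (by positivity)]
  ring_nf

lemma psiW_eq (a₀ α β δ t : ℝ) :
    psiW a₀ α β δ t
      = fun y : E n => Aco a₀ α β δ / (1 + t) ^ (1 + β) * (1 + ‖y‖ ^ 2) ^ ((2 - α) / 2) := by
  funext y
  rw [psiW, jap_rpow]
  ring

lemma bco_div_one_add (β : ℝ) {t : ℝ} (ht : -1 < t) :
    bco β t / (1 + t) = ((1 + t) ^ (1 + β))⁻¹ := by
  have h : 0 < 1 + t := by linarith
  rw [bco, ← Real.rpow_sub_one h.ne', ← Real.rpow_neg h.le]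
  ring_nf

end

theorem lap_psiW_ge_general {n : ℕ} (a₀ α β δ : ℝ) (ha₀ : 0 < a₀)
    (hα : 0 ≤ α) (hβ : 0 ≤ β) (hαβ : α + β < 1) (hδ : 0 < δ)
    (t : ℝ) (ht : 0 ≤ t) (x : E n) :
    lap (psiW a₀ α β δ t) x
      ≥ ((1 + β) * ((n : ℝ) - α) / ((2 - α) * (2 + δ))) * (aco a₀ α x * bco β t / (1 + t)) := by
  have h2α : 0 < 2 - α := by linarith
  set p := (2 - α) / 2 with hp
  have hC : 0 ≤ Aco a₀ α β δ / (1 + t) ^ (1 + β) := by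
    unfold Aco
    positivity
  have hrhs : ((1 + β) * ((n : ℝ) - α) / ((2 - α) * (2 + δ))) * (aco a₀ α x * bco β t / (1 + t))
      = Aco a₀ α β δ / (1 + t) ^ (1 + β) * (2 * p * (n + 2 * p - 2) * (1 + ‖x‖ ^ 2) ^ (p - 1)) := by
    rw [aco, mul_div_assoc (a₀ * _), bco_div_one_add β (by linarith), jap_rpow,
      show -α / 2 = p - 1 by rw [hp]; ring, Aco, hp]
    field_simp
    ring
  rw [ge_iff_le, hrhs, psiW_eq, lap_const_mul]
  exact mul_le_mul_of_nonneg_left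
    (mul_rpow_le_lap_one_add_norm_sq_rpow (by positivity) (by linarith) x) hC

/-- lower bound for the Laplacian of the weight function. -/
theorem lap_psiW_ge {n : ℕ} (hn : 1 ≤ n) (a₀ α β δ : ℝ) (ha₀ : 0 < a₀)
    (hα : 0 ≤ α) (hβ : 0 ≤ β) (hαβ : α + β < 1) (hδ : 0 < δ)
    (t : ℝ) (ht : 0 ≤ t) (x : E n) :
    lap (psiW a₀ α β δ t) x
      ≥ ((1 + β) * ((n : ℝ) - α) / ((2 - α) * (2 + δ))) * (aco a₀ α x * bco β t / (1 + t)) :=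
  lap_psiW_ge_general a₀ α β δ ha₀ hα hβ hαβ hδ t ht x
end
end

section
/- For every t ≥ 0 and x ∈ ℝⁿ, (−∂_t ψ(t,x)) · a(x)b(t) ≥ (2+δ) |∇_x ψ(t,x)|². -/
noncomputable section

open Real MeasureTheory Filter
open scoped RealInnerProductSpace ENNReal

/-! With `T = 1 + t`, both derivatives are explicit: `∂ₜψ = -(1 + β) ψ / T` and
`∇ψ = A (2 - α) ⟨x⟩^{-α} T^{-1-β} x`. By the choice of `A`, `(2 + δ)(2 - α)² A² = (1 + β) a₀ A`,
so after dividing by `(⟨x⟩^{-α} T^{-1-β})²` the claim becomes `(1 + β) a₀ A |x|² ≤ (1 + β) a₀ A ⟨x⟩²`,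
which holds because `⟨x⟩² = 1 + |x|²` and `(1 + β) a₀ A = (2 + δ)(2 - α)² A² ≥ 0`. -/

section Radial

variable {F : Type*} [NormedAddCommGroup F] [InnerProductSpace ℝ F] [CompleteSpace F]

theorem HasGradientAt.const_mul {f : F → ℝ} {f' x : F} (c : ℝ) (h : HasGradientAt f f' x) :
    HasGradientAt (fun y => c * f y) (c • f') x := by
  rw [hasGradientAt_iff_hasFDerivAt, map_smul]
  exact (hasGradientAt_iff_hasFDerivAt.1 h).const_mul c

theorem hasGradientAt_one_add_norm_sq_rpow (p : ℝ) (x : F) :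
    HasGradientAt (fun y => (1 + ‖y‖ ^ 2) ^ p) ((2 * p * (1 + ‖x‖ ^ 2) ^ (p - 1)) • x) x := by
  have hpos : (0 : ℝ) < 1 + ‖x‖ ^ 2 := by positivity
  have h := (Real.hasDerivAt_rpow_const (p := p) (Or.inl hpos.ne')).comp_hasFDerivAt x
    ((hasStrictFDerivAt_norm_sq x).hasFDerivAt.const_add 1)
  refine hasGradientAt_iff_hasFDerivAt.2 (h.congr_fderiv ?_)
  ext y
  simp only [smul_apply, innerSL_apply_apply, InnerProductSpace.toDual_apply_apply,
    real_inner_smul_left, smul_eq_mul]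
  ring

theorem hasGradientAt_sqrt_one_add_norm_sq_rpow (s : ℝ) (x : F) :
    HasGradientAt (fun y => √(1 + ‖y‖ ^ 2) ^ s) ((s * √(1 + ‖x‖ ^ 2) ^ (s - 2)) • x) x := by
  have hsqrt : ∀ (r : ℝ) (y : F), √(1 + ‖y‖ ^ 2) ^ r = (1 + ‖y‖ ^ 2) ^ (r / 2) := fun r y => by
    rw [Real.sqrt_eq_rpow, ← Real.rpow_mul (by positivity)]
    ring_nf
  simp only [hsqrt]
  convert hasGradientAt_one_add_norm_sq_rpow (s / 2) x using 3 <;> ring_nf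

end Radial

theorem hasDerivAt_div_one_add_rpow (c p : ℝ) {t : ℝ} (ht : 0 < 1 + t) :
    HasDerivAt (fun s => c / (1 + s) ^ p) (-p * (c / (1 + t) ^ p) / (1 + t)) t := by
  have h : HasDerivAt (fun s => c / (1 + s) ^ p)
      ((0 * (1 + t) ^ p - c * (p * (1 + t) ^ (p - 1))) / ((1 + t) ^ p) ^ 2) t :=
    (hasDerivAt_const t c).div (((hasDerivAt_id' t).const_add 1).rpow_const (p := p)
      (Or.inl ht.ne') |>.congr_deriv (by ring)) (by positivity)
  refine h.congr_deriv ?_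
  rw [Real.rpow_sub_one ht.ne']
  field_simp
  ring

theorem jap_pos {n : ℕ} (x : E n) : 0 < jap x := Real.sqrt_pos.2 (by positivity)

theorem jap_sq {n : ℕ} (x : E n) : jap x ^ 2 = 1 + ‖x‖ ^ 2 := Real.sq_sqrt (by positivity)

theorem jap_rpow_two_sub {n : ℕ} (α : ℝ) (x : E n) :
    jap x ^ (2 - α) = (1 + ‖x‖ ^ 2) * jap x ^ (-α) := by
  rw [sub_eq_add_neg, rpow_add (jap_pos x), rpow_two, jap_sq]

theorem hasGradientAt_psiW {n : ℕ} (a₀ α β δ t : ℝ) (x : E n) :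
    HasGradientAt (psiW a₀ α β δ t)
      ((Aco a₀ α β δ / (1 + t) ^ (1 + β) * ((2 - α) * jap x ^ (-α))) • x) x := by
  have h := (hasGradientAt_sqrt_one_add_norm_sq_rpow (2 - α) x).const_mul
    (Aco a₀ α β δ / (1 + t) ^ (1 + β))
  rw [sub_sub_cancel_left, smul_smul] at h
  convert h using 2 with y
  · simp only [psiW, jap]
    ring
  · rfl

theorem hasDerivAt_psiW {n : ℕ} (a₀ α β δ : ℝ) {t : ℝ} (ht : 0 < 1 + t) (x : E n) :
    HasDerivAt (fun s => psiW a₀ α β δ s x) (-(1 + β) * psiW a₀ α β δ t x / (1 + t)) t :=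
  hasDerivAt_div_one_add_rpow _ _ ht

/-- Also true when `(2 - α) ^ 2 * (2 + δ) = 0`: then `Aco = 0` since `x / 0 = 0`. -/
theorem two_add_mul_sq_mul_Aco_sq (a₀ α β δ : ℝ) :
    (2 + δ) * (2 - α) ^ 2 * Aco a₀ α β δ ^ 2 = (1 + β) * a₀ * Aco a₀ α β δ := by
  unfold Aco
  rcases eq_or_ne ((2 - α) ^ 2 * (2 + δ)) 0 with h | h
  · simp [h]
  · field_simp

theorem neg_dt_psiW_mul_ab_ge_general {n : ℕ} (a₀ α β δ : ℝ) (hδ : 0 < δ)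
    (t : ℝ) (ht : 0 ≤ t) (x : E n) :
    (-(deriv (fun s => psiW a₀ α β δ s x) t)) * (aco a₀ α x * bco β t)
      ≥ (2 + δ) * ‖gradient (psiW a₀ α β δ t) x‖ ^ 2 := by
  have hT : 0 < 1 + t := by linarith
  rw [(hasDerivAt_psiW a₀ α β δ hT x).deriv, (hasGradientAt_psiW a₀ α β δ t x).gradient,
    norm_smul, Real.norm_eq_abs, mul_pow, sq_abs, psiW, aco, bco, jap_rpow_two_sub,
    rpow_add hT, rpow_one, rpow_neg hT.le]
  set A := Aco a₀ α β δ
  set u := jap x ^ (-α)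
  set v := (1 + t) ^ β
  have key := two_add_mul_sq_mul_Aco_sq a₀ α β δ
  have hc : 0 ≤ (1 + β) * a₀ * A := key ▸ by positivity
  calc (2 + δ) * ((A / ((1 + t) * v) * ((2 - α) * u)) ^ 2 * ‖x‖ ^ 2)
      = (1 + β) * a₀ * A * (u / ((1 + t) * v)) ^ 2 * ‖x‖ ^ 2 := by rw [← key]; ring
    _ ≤ (1 + β) * a₀ * A * (u / ((1 + t) * v)) ^ 2 * (1 + ‖x‖ ^ 2) := by gcongr; linarith
    _ = _ := by field_simp

/-- `(-∂_tψ) a(x) b(t) ≥ (2+δ)|∇ψ|²`. -/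
theorem neg_dt_psiW_mul_ab_ge {n : ℕ} (hn : 1 ≤ n) (a₀ α β δ : ℝ) (ha₀ : 0 < a₀)
    (hα : 0 ≤ α) (hβ : 0 ≤ β) (hαβ : α + β < 1) (hδ : 0 < δ)
    (t : ℝ) (ht : 0 ≤ t) (x : E n) :
    (-(deriv (fun s => psiW a₀ α β δ s x) t)) * (aco a₀ α x * bco β t)
      ≥ (2 + δ) * ‖gradient (psiW a₀ α β δ t) x‖ ^ 2 :=
  neg_dt_psiW_mul_ab_ge_general a₀ α β δ hδ t ht x
end
end

section
/- Let p > 1. There exists a constant C > 0, depending only on p, α, β, a₀, δ, such that for all t ≥ 0 and x ∈ ℝⁿ, e^{(4/(p+1))ψ(t,x)} ≤ C (1+t)^{β + (1+β)α/(2−α)} e^{2ψ(t,x)} a(x) b(t). Equivalently, a(x)^{−1} b(t)^{−1} e^{(4/(p+1) − 2)ψ(t,x)} ≤ C (1+t)^{β + (1+β)α/(2−α)}. -/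
noncomputable section

open Real MeasureTheory Filter
open scoped RealInnerProductSpace ENNReal

/-!
Write `r = ⟨x⟩`, `T = (1+t)^{1+β}` and `γ = α/(2-α)`. Since `4/(p+1) < 2`, the exponent
`(4/(p+1) - 2)ψ` equals `-c u` with `c > 0` and `u = r^{2-α}/T`, while
`a(x)⁻¹ b(t)⁻¹ = a₀⁻¹ r^α (1+t)^β` and `r^α = (uT)^γ`. Hence the left side of the second
inequality is `a₀⁻¹ (1+t)^β T^γ · u^γ e^{-cu}`, and `u^γ e^{-cu} ≤ (γ/c)^γ` for all `u ≥ 0`.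
The first inequality is the second one multiplied by `a(x) b(t) e^{2ψ}`.
-/

namespace Real

theorem rpow_le_rpow_self_mul_exp {γ v : ℝ} (hγ : 0 ≤ γ) (hv : 0 ≤ v) :
    v ^ γ ≤ γ ^ γ * exp v := by
  rcases hγ.eq_or_lt with rfl | hγ
  · simpa using one_le_exp hv
  have hle : v / γ ≤ exp (v / γ) := by linarith [add_one_le_exp (v / γ)]
  calc v ^ γ = γ ^ γ * (v / γ) ^ γ := by
        rw [div_rpow hv hγ.le, mul_div_cancel₀ _ (rpow_pos_of_pos hγ γ).ne']
    _ ≤ γ ^ γ * exp (v / γ) ^ γ := by gcongr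
    _ = γ ^ γ * exp v := by rw [← exp_mul, div_mul_cancel₀ v hγ.ne']

theorem rpow_mul_exp_neg_mul_le {γ c u : ℝ} (hγ : 0 ≤ γ) (hc : 0 < c) (hu : 0 ≤ u) :
    u ^ γ * exp (-(c * u)) ≤ (γ / c) ^ γ := by
  have hcu := rpow_le_rpow_self_mul_exp hγ (mul_nonneg hc.le hu)
  rw [mul_rpow hc.le hu] at hcu
  rw [div_rpow hγ hc.le, ← le_div_iff₀ (exp_pos _), exp_neg, div_inv_eq_mul,
    div_mul_eq_mul_div, le_div_iff₀ (rpow_pos_of_pos hc γ)]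
  linarith

theorem rpow_mul_exp_neg_mul_rpow_div_le {α c r T : ℝ} (hα : 0 ≤ α) (hα2 : α < 2) (hc : 0 < c)
    (hr : 0 < r) (hT : 0 < T) :
    r ^ α * exp (-(c * (r ^ (2 - α) / T)))
      ≤ (α / (2 - α) / c) ^ (α / (2 - α)) * T ^ (α / (2 - α)) := by
  set γ := α / (2 - α)
  set u := r ^ (2 - α) / T
  have hu : 0 ≤ u := by positivity
  have hrα : r ^ α = u ^ γ * T ^ γ := by
    rw [← mul_rpow hu hT.le, div_mul_cancel₀ _ hT.ne', ← rpow_mul hr.le]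
    congr 1
    exact (mul_div_cancel₀ α (sub_pos.2 hα2).ne').symm
  calc r ^ α * exp (-(c * u)) = (u ^ γ * exp (-(c * u))) * T ^ γ := by rw [hrα]; ring
    _ ≤ (γ / c) ^ γ * T ^ γ := by
      gcongr
      exact rpow_mul_exp_neg_mul_le (div_nonneg hα (by linarith)) hc hu

end Real

theorem one_le_jap {n : ℕ} (x : E n) : 1 ≤ jap x :=
  Real.one_le_sqrt.2 (le_add_of_nonneg_right (by positivity))

theorem aco_pos {n : ℕ} {a₀ : ℝ} (ha₀ : 0 < a₀) (α : ℝ) (x : E n) : 0 < aco a₀ α x :=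
  mul_pos ha₀ (Real.rpow_pos_of_pos (one_pos.trans_le (one_le_jap x)) _)

theorem Aco_pos {a₀ α β δ : ℝ} (ha₀ : 0 < a₀) (hα : α < 2) (hβ : -1 < β) (hδ : -2 < δ) :
    0 < Aco a₀ α β δ := by
  unfold Aco
  have : 0 < 2 - α := by linarith
  have : 0 < 2 + δ := by linarith
  have : 0 < 1 + β := by linarith
  positivity

theorem inv_aco_mul_inv_bco_mul_exp_le {n : ℕ} {a₀ α β c t : ℝ} (ha₀ : 0 ≤ a₀) (hα : 0 ≤ α)
    (hα2 : α < 2) (hc : 0 < c) (ht : 0 < 1 + t) (x : E n) :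
    (aco a₀ α x)⁻¹ * (bco β t)⁻¹ * exp (-(c * (jap x ^ (2 - α) / (1 + t) ^ (1 + β))))
      ≤ (α / (2 - α) / c) ^ (α / (2 - α)) / a₀ * (1 + t) ^ (β + (1 + β) * α / (2 - α)) := by
  have hr := one_pos.trans_le (one_le_jap x)
  have hcore := rpow_mul_exp_neg_mul_rpow_div_le hα hα2 hc hr (rpow_pos_of_pos ht (1 + β))
  have hpow : (1 + t) ^ (β + (1 + β) * α / (2 - α))
      = (1 + t) ^ β * ((1 + t) ^ (1 + β)) ^ (α / (2 - α)) := by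
    rw [← rpow_mul ht.le, ← rpow_add ht, mul_div_assoc]
  rw [aco, bco, mul_inv, rpow_neg hr.le, rpow_neg ht.le, inv_inv, inv_inv, hpow]
  calc a₀⁻¹ * jap x ^ α * (1 + t) ^ β * exp (-(c * (jap x ^ (2 - α) / (1 + t) ^ (1 + β))))
      = a₀⁻¹ * (1 + t) ^ β
          * (jap x ^ α * exp (-(c * (jap x ^ (2 - α) / (1 + t) ^ (1 + β))))) := by ring
    _ ≤ _ := mul_le_mul_of_nonneg_left hcore (by positivity)
    _ = _ := by ring

theorem weight_comparison_general {n : ℕ} (a₀ α β δ p : ℝ) (ha₀ : 0 < a₀)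
    (hα : 0 ≤ α) (hβ : 0 ≤ β) (hαβ : α + β < 1) (hδ : 0 < δ) (hp : 1 < p) :
    ∃ C > 0, ∀ t : ℝ, 0 ≤ t → ∀ x : E n,
      Real.exp ((4 / (p + 1)) * psiW a₀ α β δ t x)
        ≤ C * (1 + t) ^ (β + (1 + β) * α / (2 - α)) *
            (Real.exp (2 * psiW a₀ α β δ t x) * (aco a₀ α x * bco β t)) ∧
      (aco a₀ α x)⁻¹ * (bco β t)⁻¹ * Real.exp ((4 / (p + 1) - 2) * psiW a₀ α β δ t x)
        ≤ C * (1 + t) ^ (β + (1 + β) * α / (2 - α)) := by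
  have hα2 : α < 2 := by linarith
  set c := (2 - 4 / (p + 1)) * Aco a₀ α β δ
  have hc : 0 < c := by
    refine mul_pos ?_ (Aco_pos ha₀ hα2 (by linarith) (by linarith))
    rw [sub_pos, div_lt_iff₀ (by linarith)]
    linarith
  set γ := α / (2 - α)
  have hC : 0 < (γ / c) ^ γ / a₀ := by
    refine div_pos ?_ ha₀
    have hγ0 : 0 ≤ γ := div_nonneg hα (by linarith)
    rcases hγ0.eq_or_lt with hγ | hγ
    · rw [← hγ, Real.rpow_zero]
      exact one_pos
    · exact Real.rpow_pos_of_pos (div_pos hγ hc) γ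
  refine ⟨_, hC, fun t ht x => ?_⟩
  have hψ : (4 / (p + 1) - 2) * psiW a₀ α β δ t x
      = -(c * (jap x ^ (2 - α) / (1 + t) ^ (1 + β))) := by
    rw [psiW]; ring
  have hsecond := hψ ▸ inv_aco_mul_inv_bco_mul_exp_le (β := β) ha₀.le hα hα2 hc (by linarith) x
  refine ⟨?_, hsecond⟩
  have ha : 0 < aco a₀ α x := aco_pos ha₀ α x
  have hb : 0 < bco β t := Real.rpow_pos_of_pos (by linarith) _
  calc Real.exp ((4 / (p + 1)) * psiW a₀ α β δ t x)
      = (aco a₀ α x)⁻¹ * (bco β t)⁻¹ * Real.exp ((4 / (p + 1) - 2) * psiW a₀ α β δ t x)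
          * (Real.exp (2 * psiW a₀ α β δ t x) * (aco a₀ α x * bco β t)) := by
        rw [← sub_add_cancel (4 / (p + 1) * psiW a₀ α β δ t x) (2 * psiW a₀ α β δ t x),
          Real.exp_add, sub_mul]
        field_simp
    _ ≤ _ := by gcongr

/-- comparing the weight `e^{(4/(p+1))ψ}` with `e^{2ψ} a(x) b(t)`. -/
theorem weight_comparison {n : ℕ} (hn : 1 ≤ n) (a₀ α β δ p : ℝ) (ha₀ : 0 < a₀)
    (hα : 0 ≤ α) (hβ : 0 ≤ β) (hαβ : α + β < 1) (hδ : 0 < δ) (hp : 1 < p) :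
    ∃ C > 0, ∀ t : ℝ, 0 ≤ t → ∀ x : E n,
      Real.exp ((4 / (p + 1)) * psiW a₀ α β δ t x)
        ≤ C * (1 + t) ^ (β + (1 + β) * α / (2 - α)) *
            (Real.exp (2 * psiW a₀ α β δ t x) * (aco a₀ α x * bco β t)) ∧
      (aco a₀ α x)⁻¹ * (bco β t)⁻¹ * Real.exp ((4 / (p + 1) - 2) * psiW a₀ α β δ t x)
        ≤ C * (1 + t) ^ (β + (1 + β) * α / (2 - α)) :=
  weight_comparison_general a₀ α β δ p ha₀ hα hβ hαβ hδ hp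
end
end

section
/- Let n ≥ 1, α, β ≥ 0 with α + β < 1, and let p satisfy p > 1 + 2/(n−α), and p ≤ n/(n−2) if n ≥ 3. Set B := (1+β)(n−α)/(2−α) + β and σ := n(p−1)/(2(p+1)). For ε ≥ 0 define γ₁(ε) := B + 1 − ε + [β + (1+β)α/(2−α)]·(1−σ)(p+1)/2 − σ(p+1)/2 − (B−ε)(p+1)/2 and γ₂(ε) := B + 1 − ε + [β + (1+β)α/(2−α)]·(1−σ)(p+1)/2 − (B−ε)(1−σ)(p+1)/2 − (B+1−ε)σ(p+1)/2. Then there exists ε₀ > 0 such that for all 0 < ε ≤ ε₀ both γ₁(ε) < 0 and γ₂(ε) < 0. -/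
noncomputable section

open Real MeasureTheory Filter
open scoped RealInnerProductSpace ENNReal

/-!
Writing `B` and `σ` out, both exponents collapse to the same affine function of `ε`,
`γ₁(ε) = γ₂(ε) = ε (p - 1) / 2 - (1 + β) ((n - α)(p - 1) - 2) / (2 - α)`,
and the supercriticality condition `p > 1 + 2 / (n - α)` says exactly that the constant term is
negative. So any `ε₀ > 0` with `ε₀ (p - 1) < 2 (1 + β) ((n - α)(p - 1) - 2) / (2 - α)` works.
-/

namespace SupercriticalExponent

variable (N α β p ε : ℝ)

def expB : ℝ := (1 + β) * (N - α) / (2 - α) + β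

def expSigma : ℝ := N * (p - 1) / (2 * (p + 1))

def gamma₁ : ℝ :=
  expB N α β + 1 - ε
    + (β + (1 + β) * α / (2 - α)) * ((1 - expSigma N p) * (p + 1) / 2)
    - expSigma N p * (p + 1) / 2
    - (expB N α β - ε) * ((p + 1) / 2)

def gamma₂ : ℝ :=
  expB N α β + 1 - ε
    + (β + (1 + β) * α / (2 - α)) * ((1 - expSigma N p) * (p + 1) / 2)
    - (expB N α β - ε) * ((1 - expSigma N p) * (p + 1) / 2)
    - (expB N α β + 1 - ε) * (expSigma N p * (p + 1) / 2)

/-- `(1 + β)(n - α)/(2 - α)` times the excess of `p` over the critical exponent `1 + 2/(n - α)`. -/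
def supercriticalGap : ℝ := (1 + β) * ((N - α) * (p - 1) - 2) / (2 - α)

theorem gamma₂_eq_gamma₁ : gamma₂ N α β p ε = gamma₁ N α β p ε := by
  unfold gamma₁ gamma₂
  ring

theorem gamma₁_eq (hα : 2 - α ≠ 0) (hp : p + 1 ≠ 0) :
    gamma₁ N α β p ε = ε * (p - 1) / 2 - supercriticalGap N α β p := by
  unfold gamma₁ expB expSigma supercriticalGap
  field_simp
  ring

theorem gamma₁_neg (hα : 2 - α ≠ 0) (hp : p + 1 ≠ 0)
    (hε : ε * (p - 1) < 2 * supercriticalGap N α β p) :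
    gamma₁ N α β p ε < 0 := by
  rw [gamma₁_eq N α β p ε hα hp]
  linarith

theorem supercriticalGap_pos (hα : α < 2) (hβ : -1 < β) (hgap : 2 < (N - α) * (p - 1)) :
    0 < supercriticalGap N α β p := by
  unfold supercriticalGap
  apply div_pos (mul_pos _ _) _ <;> linarith

end SupercriticalExponent

theorem lt_mul_sub_one_of_one_add_div_lt {a d p : ℝ} (hd : 0 < d) (h : 1 + a / d < p) :
    a < d * (p - 1) := by
  rw [← div_lt_iff₀' hd]
  linarith

open SupercriticalExponent in
theorem gamma_neg_general {n : ℕ} (hn : 1 ≤ n) (α β p : ℝ)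
    (hβ : 0 ≤ β) (hαβ : α + β < 1)
    (hpc : 1 + 2 / ((n : ℝ) - α) < p) :
    ∃ ε₀ > 0, ∀ ε : ℝ, 0 < ε → ε ≤ ε₀ →
      (((1 + β) * ((n : ℝ) - α) / (2 - α) + β) + 1 - ε
        + (β + (1 + β) * α / (2 - α)) * ((1 - (n : ℝ) * (p - 1) / (2 * (p + 1))) * (p + 1) / 2)
        - ((n : ℝ) * (p - 1) / (2 * (p + 1))) * (p + 1) / 2
        - (((1 + β) * ((n : ℝ) - α) / (2 - α) + β) - ε) * ((p + 1) / 2) < 0) ∧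
      (((1 + β) * ((n : ℝ) - α) / (2 - α) + β) + 1 - ε
        + (β + (1 + β) * α / (2 - α)) * ((1 - (n : ℝ) * (p - 1) / (2 * (p + 1))) * (p + 1) / 2)
        - (((1 + β) * ((n : ℝ) - α) / (2 - α) + β) - ε)
            * ((1 - (n : ℝ) * (p - 1) / (2 * (p + 1))) * (p + 1) / 2)
        - (((1 + β) * ((n : ℝ) - α) / (2 - α) + β) + 1 - ε)
            * (((n : ℝ) * (p - 1) / (2 * (p + 1))) * (p + 1) / 2) < 0) := by
  have hn1 : (1 : ℝ) ≤ n := by exact_mod_cast hn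
  have hα : α < 2 := by linarith
  have hgap : 2 < ((n : ℝ) - α) * (p - 1) :=
    lt_mul_sub_one_of_one_add_div_lt (by linarith) hpc
  have hp : 1 < p := by nlinarith
  have hc := supercriticalGap_pos n α β p hα (by linarith) hgap
  refine ⟨supercriticalGap n α β p / (p - 1), by positivity, fun ε _ hε => ?_⟩
  have hεc : ε * (p - 1) < 2 * supercriticalGap n α β p := by
    rw [le_div_iff₀ (by linarith)] at hε
    linarith
  show gamma₁ n α β p ε < 0 ∧ gamma₂ n α β p ε < 0
  rw [gamma₂_eq_gamma₁]
  have h := gamma₁_neg n α β p ε (by linarith : (0 : ℝ) < 2 - α).ne'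
    (by linarith : (0 : ℝ) < p + 1).ne' hεc
  exact ⟨h, h⟩

/-- for supercritical `p`, the exponents `γ₁(ε)` and `γ₂(ε)` are negative for all
sufficiently small `ε > 0`. -/
theorem gamma_neg {n : ℕ} (hn : 1 ≤ n) (α β p : ℝ)
    (hα : 0 ≤ α) (hβ : 0 ≤ β) (hαβ : α + β < 1)
    (hpc : 1 + 2 / ((n : ℝ) - α) < p) (hpn : 3 ≤ n → p ≤ (n : ℝ) / ((n : ℝ) - 2)) :
    ∃ ε₀ > 0, ∀ ε : ℝ, 0 < ε → ε ≤ ε₀ →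
      (((1 + β) * ((n : ℝ) - α) / (2 - α) + β) + 1 - ε
        + (β + (1 + β) * α / (2 - α)) * ((1 - (n : ℝ) * (p - 1) / (2 * (p + 1))) * (p + 1) / 2)
        - ((n : ℝ) * (p - 1) / (2 * (p + 1))) * (p + 1) / 2
        - (((1 + β) * ((n : ℝ) - α) / (2 - α) + β) - ε) * ((p + 1) / 2) < 0) ∧
      (((1 + β) * ((n : ℝ) - α) / (2 - α) + β) + 1 - ε
        + (β + (1 + β) * α / (2 - α)) * ((1 - (n : ℝ) * (p - 1) / (2 * (p + 1))) * (p + 1) / 2)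
        - (((1 + β) * ((n : ℝ) - α) / (2 - α) + β) - ε)
            * ((1 - (n : ℝ) * (p - 1) / (2 * (p + 1))) * (p + 1) / 2)
        - (((1 + β) * ((n : ℝ) - α) / (2 - α) + β) + 1 - ε)
            * (((n : ℝ) * (p - 1) / (2 * (p + 1))) * (p + 1) / 2) < 0) :=
  gamma_neg_general hn α β p hβ hαβ hpc
end
end
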